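/- arXiv:1006.3984 — 4 statements merged into one kernel-verified Lean document; each statement's English description precedes it below -/
import Mathlib

section
/- For every w ∈ Ȟ¹ one has ρ₀(w) = ρ(w). -/
noncomputable section

open Finset

/-- Hoffman's algebra `H = ℚ⟨x,y⟩`, the noncommutative polynomial algebra
over `ℚ` in two indeterminates. -/
abbrev H : Type := FreeAlgebra ℚ (Fin 2)

/-- The indeterminate `x`. -/
def Hx : H := FreeAlgebra.ι ℚ 0

/-- The indeterminate `y`. -/
def Hy : H := FreeAlgebra.ι ℚ 1

/-- `z = x + y`. -/
def Hz : H := Hx + Hy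

/-- `z_k = x^(k-1) y`. -/
def zw (k : ℕ) : H := Hx ^ (k - 1) * Hy

/-- The monomial `z_{k 0} z_{k 1} ⋯ z_{k (l-1)}`. -/
def zwords {l : ℕ} (k : Fin l → ℕ) : H := (List.ofFn fun i => zw (k i)).prod

/-- The monomial `z_{k a} z_{k (a+1)} ⋯ z_{k (a+l-1)}`. -/
def zseq (k : ℕ → ℕ) (a l : ℕ) : H := ((List.range l).map fun t => zw (k (a + t))).prod

/-- `Ȟ¹`: the ℚ-span of the monomials `z_{k₁}⋯z_{k_l}` over tuples of positive
integers not all equal to 1. -/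
def Hcheck : Submodule ℚ H :=
  Submodule.span ℚ
    {w | ∃ (l : ℕ) (k : Fin (l + 1) → ℕ), (∀ i, 1 ≤ k i) ∧ (∃ i, k i ≠ 1) ∧ w = zwords k}

/-- `Ȟ¹_d`: the subspace of `Ȟ¹` spanned by the monomials of total degree `d`. -/
def HcheckDeg (d : ℕ) : Submodule ℚ H :=
  Submodule.span ℚ
    {w | ∃ (l : ℕ) (k : Fin (l + 1) → ℕ),
      (∀ i, 1 ≤ k i) ∧ (∃ i, k i ≠ 1) ∧ (∑ i, k i) = d ∧ w = zwords k}

/-- `H⁰_d`: the span of the monomials `z_{k₁}⋯z_{k_l}` of total degree `d` with `k₁ ≥ 2`. -/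
def H0Deg (d : ℕ) : Submodule ℚ H :=
  Submodule.span ℚ
    {w | ∃ (l : ℕ) (k : Fin (l + 1) → ℕ),
      (∀ i, 1 ≤ k i) ∧ 2 ≤ k 0 ∧ (∑ i, k i) = d ∧ w = zwords k}

/-- The multiplication map `M_n : H^{⊗(n+2)} → H`. -/
def Mn (n : ℕ) : TensorPower ℚ (n + 2) H →ₗ[ℚ] H :=
  PiTensorProduct.lift (MultilinearMap.mkPiAlgebraFin ℚ (n + 2) H)

/-- The `H`-bimodule action `a ◇ t ◇ b` on `H^{⊗(n+2)}`:
`a ◇ (w₁⊗⋯⊗w_{n+2}) ◇ b = w₁b ⊗ w₂ ⊗ ⋯ ⊗ w_{n+1} ⊗ a w_{n+2}`. -/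
def dia (n : ℕ) (a : H) (t : TensorPower ℚ (n + 2) H) (b : H) : TensorPower ℚ (n + 2) H :=
  PiTensorProduct.map
    (fun i => if i = 0 then LinearMap.mulRight ℚ b
      else if i = Fin.last (n + 1) then LinearMap.mulLeft ℚ a
      else LinearMap.id) t

/-- The pure tensor `x ⊗ z^{⊗n} ⊗ y ∈ H^{⊗(n+2)}`. -/
def xzy (n : ℕ) : TensorPower ℚ (n + 2) H :=
  PiTensorProduct.tprod ℚ
    (fun i : Fin (n + 2) => if i = 0 then Hx else if i = Fin.last (n + 1) then Hy else Hz)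

/-- The pure tensor `x ⊗ y^{⊗(n+1)} ∈ H^{⊗(n+2)}`. -/
def xyy (n : ℕ) : TensorPower ℚ (n + 2) H :=
  PiTensorProduct.tprod ℚ (fun i : Fin (n + 2) => if i = 0 then Hx else Hy)

/-- The defining properties of the family of maps `C_n : H → H^{⊗(n+2)}`. -/
def IsC (C : ∀ n : ℕ, H →ₗ[ℚ] TensorPower ℚ (n + 2) H) : Prop :=
  ∀ n, C n 1 = 0 ∧ C n Hx = xzy n ∧ C n Hy = -xzy n ∧
    ∀ w w' : H, C n (w * w') = dia n 1 (C n w) w' + dia n w (C n w') 1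

/-- `γ`: the algebra endomorphism of `H` with `γ(x) = x`, `γ(y) = x + y`
(it is an automorphism). -/
def gam : H →ₐ[ℚ] H := FreeAlgebra.lift ℚ ![Hx, Hz]

/-- `γ⁻¹`: the inverse automorphism of `γ`, having `γ⁻¹(x) = x`, `γ⁻¹(y) = y - x`. -/
def gamInv : H →ₐ[ℚ] H := FreeAlgebra.lift ℚ ![Hx, Hy - Hx]

/-- The defining properties of the family of maps `C̄_n : H → H^{⊗(n+2)}`. -/
def IsCbar (C : ∀ n : ℕ, H →ₗ[ℚ] TensorPower ℚ (n + 2) H) : Prop :=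
  ∀ n, C n 1 = 0 ∧ C n Hx = xyy n ∧ C n Hy = -xyy n ∧
    ∀ w w' : H, C n (w * w') = dia n 1 (C n w) (gamInv w') + dia n (gamInv w) (C n w') 1

/-- The value of `ρ` on the monomial `z_{k 0} ⋯ z_{k (l-1)}` (for `k` periodic of
period `l`):
`∑_{j<l} ∑_{i=1}^{k_j−1} z_{k_j−i+1} z_{k_{j+1}} ⋯ z_{k_{j+l−1}} z_i
  − ∑_{j<l} z_{k_j+1} z_{k_{j+1}} ⋯ z_{k_{j+l−1}}`. -/
def rhoFormula (k : ℕ → ℕ) (l : ℕ) : H :=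
  (∑ j ∈ Finset.range l, ∑ i ∈ Finset.Icc 1 (k j - 1),
      zw (k j - i + 1) * zseq k (j + 1) (l - 1) * zw i) -
    ∑ j ∈ Finset.range l, zw (k j + 1) * zseq k (j + 1) (l - 1)

/-- The defining property of the ℚ-linear map `ρ` on `Ȟ¹`: its values on the
monomials `z_{k₁}⋯z_{k_l}` (positive indices, not all 1). -/
def IsRho (rho : H →ₗ[ℚ] H) : Prop :=
  ∀ (l : ℕ) (k : ℕ → ℕ), 1 ≤ l → (∀ j, k (j + l) = k j) → (∀ j, 1 ≤ k j) →
    (∃ j, k j ≠ 1) → rho (zseq k 0 l) = rhoFormula k l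

/-- The defining property of the map `d` on `ℚ + Hy`: `d(1) = 1`, `d(wy) = γ(w)y`. -/
def IsD (dm : H →ₗ[ℚ] H) : Prop := dm 1 = 1 ∧ ∀ w : H, dm (w * Hy) = gam w * Hy

/-- The `n`-step Lucas numbers `L^n_m`: `L^n_m = 2^m − 1` for `m ≤ n`,
`L^n_m = L^n_{m−1} + ⋯ + L^n_{m−n}` for `m ≥ n+1`, and `L^0_m = 0`. -/
def Lucas (n : ℕ) (m : ℕ) : ℕ :=
  if _hn : n = 0 then 0
  else if _hm : m ≤ n then 2 ^ m - 1
  else ∑ i ∈ (Finset.Icc 1 n).attach, Lucas n (m - i.1)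
termination_by m
decreasing_by
  have h1 := (Finset.mem_Icc.mp i.2).1
  omega

/-- The multiple zeta value `ζ(k₁,…,k_l) = ∑_{n₁ > ⋯ > n_l ≥ 1} 1/(n₁^{k₁}⋯n_l^{k_l})`. -/
def mzeta {l : ℕ} (k : Fin l → ℕ) : ℝ :=
  ∑' n : {n : Fin l → ℕ // StrictAnti n ∧ ∀ i, 0 < n i}, ∏ i, ((n.1 i : ℝ) ^ k i)⁻¹

/-- The multiple zeta-star value
`ζ*(k₁,…,k_l) = ∑_{n₁ ≥ ⋯ ≥ n_l ≥ 1} 1/(n₁^{k₁}⋯n_l^{k_l})`. -/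
def mzetaStar {l : ℕ} (k : Fin l → ℕ) : ℝ :=
  ∑' n : {n : Fin l → ℕ // Antitone n ∧ ∀ i, 0 < n i}, ∏ i, ((n.1 i : ℝ) ^ k i)⁻¹

/-- The defining property of the map `Z : H⁰ → ℝ`. -/
def IsZ (Z : H →ₗ[ℚ] ℝ) : Prop :=
  Z 1 = 1 ∧ ∀ (l : ℕ) (k : Fin (l + 1) → ℕ), (∀ i, 1 ≤ k i) → 2 ≤ k 0 →
    Z (zwords k) = mzeta k

/-- The defining property of the map `Z̄ : H⁰ → ℝ`. -/
def IsZbar (Z : H →ₗ[ℚ] ℝ) : Prop :=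
  Z 1 = 1 ∧ ∀ (l : ℕ) (k : Fin (l + 1) → ℕ), (∀ i, 1 ≤ k i) → 2 ≤ k 0 →
    Z (zwords k) = mzetaStar k

/-- The defining property of the map `α : Hy → Hy`, dividing each monomial by
its depth. -/
def IsAlpha (am : H →ₗ[ℚ] H) : Prop :=
  ∀ (l : ℕ) (k : Fin (l + 1) → ℕ), (∀ i, 1 ≤ k i) →
    am (zwords k) = ((l : ℚ) + 1)⁻¹ • zwords k

/-- Cyclic equivalence on tuples: `v` is a cyclic shift of `u`.  Here `Fin 2`
encodes the two symbols: `0 = y`, `1 = z`. -/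
def cycRel (l : ℕ) (u v : Fin l → Fin 2) : Prop := ∃ j : Fin l, ∀ t, v t = u (t + j)

/-- `X_{l,n}`: tuples in `{y,z}^l` containing at least `n` cyclically consecutive `z`'s
(i.e. some cyclic shift begins with `z^n`).  `0 = y`, `1 = z`. -/
def Xln (l n : ℕ) : Set (Fin l → Fin 2) :=
  {u | ∃ j : Fin l, ∀ t : Fin l, (t : ℕ) < n → u (t + j) = 1}

/-- `Y_{l,n} = X_{l,n}/∼`, the set of cyclic equivalence classes in `X_{l,n}`. -/
def Yln (l n : ℕ) : Type := Quot (fun u v : Xln l n => cycRel l u.1 v.1)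

/-- The letters `y`, `z` of `{y,z}`-tuples, as elements of `H`: `0 ↦ y`, `1 ↦ z`. -/
def yz : Fin 2 → H := ![Hy, Hz]

/-- The product `u₁⋯u_l ∈ H` of a `{y,z}`-tuple. -/
def wprod {l : ℕ} (u : Fin l → Fin 2) : H := (List.ofFn fun t => yz (u t)).prod

/-!
Insert an element `c` between the two tensor factors before multiplying (`M₀^c = sandwich c`):
this gives maps `ρ^c(w) = M₀^c(C₀ w)` (`twistedRho C c`) with `ρ^1 = ρ₀`, and since
`M₀^c(a ◇ t ◇ b) = M₀^{bca}(t)`, the derivation rule of `C₀` becomes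
`ρ^c(ww') = ρ^{w'c}(w) + ρ^{cw}(w')`. Applied to a monomial `z_{k₁} ⋯ z_{k_l}` this spreads `ρ^1`
over its letters, the letter `z_{k_j}` being twisted by the cyclic rest
`c_j = z_{k_{j+1}} ⋯ z_{k_{j+l-1}}`, and on a single letter
`ρ^c(z_k) = ∑_{i=1}^{k-1} z_{k-i+1} c z_i - x c z_k`. Finally `x c_j z_{k_j} = z_{k_{j+1}+1} c_{j+1}`,
so the negative terms are those of `ρ` after a cyclic shift of `j`.
-/

lemma zseq_zero (k : ℕ → ℕ) (a : ℕ) : zseq k a 0 = 1 := by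
  simp [zseq]

lemma zseq_add (k : ℕ → ℕ) (a m m' : ℕ) :
    zseq k a (m + m') = zseq k a m * zseq k (a + m) m' := by
  simp only [zseq, List.range_add, List.map_append, List.map_map, List.prod_append,
    Function.comp_def, add_assoc]

lemma zseq_succ (k : ℕ → ℕ) (a l : ℕ) : zseq k a (l + 1) = zw (k a) * zseq k (a + 1) l := by
  rw [add_comm, zseq_add]
  simp [zseq]

lemma zseq_succ' (k : ℕ → ℕ) (a l : ℕ) : zseq k a (l + 1) = zseq k a l * zw (k (a + l)) := by
  rw [zseq_add]
  simp [zseq]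

lemma zseq_add_period {k : ℕ → ℕ} {p : ℕ} (hk : Function.Periodic k p) (a m : ℕ) :
    zseq k (a + p) m = zseq k a m := by
  simp only [zseq, add_right_comm a p, hk _]

lemma zseq_mul_zseq_of_periodic {k : ℕ → ℕ} {p : ℕ} (hk : Function.Periodic k p) {a b : ℕ}
    (m j : ℕ) (h : b + m = a + p) : zseq k b m * zseq k a j = zseq k b (m + j) := by
  rw [zseq_add, h, zseq_add_period hk]

lemma zwords_eq_zseq {n : ℕ} [NeZero n] (k : Fin n → ℕ) :
    zwords k = zseq (fun j => k (Fin.ofNat n j)) 0 n := by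
  rw [zwords, zseq, List.ofFn_eq_map, ← List.map_coe_finRange_eq_range, List.map_map]
  congr 2
  ext i
  simp [Fin.ofNat, Nat.mod_eq_of_lt i.isLt]

lemma Hx_mul_zw {m : ℕ} (hm : 1 ≤ m) : Hx * zw m = zw (m + 1) := by
  rw [zw, zw, Nat.add_sub_cancel, ← mul_assoc, ← pow_succ', Nat.sub_add_cancel hm]

lemma Finset.sum_range_shift_of_eq {M : Type*} [AddCancelCommMonoid M] (f : ℕ → M) (l : ℕ)
    (hf : f l = f 0) : ∑ j ∈ range l, f (j + 1) = ∑ j ∈ range l, f j := by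
  have h := sum_range_succ' f l
  rw [sum_range_succ, hf] at h
  exact (add_right_cancel h).symm

def sandwich (c : H) : TensorPower ℚ 2 H →ₗ[ℚ] H :=
  Mn 0 ∘ₗ PiTensorProduct.map fun i => if i = 0 then LinearMap.id else LinearMap.mulLeft ℚ c

lemma Mn_zero_tprod (f : Fin 2 → H) : Mn 0 (PiTensorProduct.tprod ℚ f) = f 0 * f 1 := by
  simp [Mn, MultilinearMap.mkPiAlgebraFin_apply, List.ofFn_succ]

lemma sandwich_tprod (c : H) (f : Fin 2 → H) :
    sandwich c (PiTensorProduct.tprod ℚ f) = f 0 * c * f 1 := by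
  simp [sandwich, Mn_zero_tprod, mul_assoc]

lemma sandwich_one : sandwich 1 = Mn 0 := by
  simp [sandwich]

lemma sandwich_dia (c a b : H) (t : TensorPower ℚ 2 H) :
    sandwich c (dia 0 a t b) = sandwich (b * c * a) t := by
  induction t using PiTensorProduct.induction_on with
  | smul_tprod r f =>
    rw [dia, map_smul, map_smul, map_smul, PiTensorProduct.map_tprod, sandwich_tprod,
      sandwich_tprod]
    simp [show (Fin.last 1 : Fin 2) = 1 from rfl, mul_assoc]
  | add u v hu hv =>
    simp only [dia, map_add] at hu hv ⊢
    rw [hu, hv]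

def twistedRho (C : ∀ n : ℕ, H →ₗ[ℚ] TensorPower ℚ (n + 2) H) (c w : H) : H :=
  sandwich c (C 0 w)

section TwistedRho

variable {C : ∀ n : ℕ, H →ₗ[ℚ] TensorPower ℚ (n + 2) H} (hC : IsC C)
include hC

lemma twistedRho_one_right (c : H) : twistedRho C c 1 = 0 := by
  simp [twistedRho, (hC 0).1]

lemma twistedRho_x (c : H) : twistedRho C c Hx = Hx * c * Hy := by
  simp [twistedRho, (hC 0).2.1, xzy, sandwich_tprod, show (Fin.last 1 : Fin 2) = 1 from rfl]

lemma twistedRho_y (c : H) : twistedRho C c Hy = -(Hx * c * Hy) := by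
  simp [twistedRho, (hC 0).2.2.1, xzy, sandwich_tprod, show (Fin.last 1 : Fin 2) = 1 from rfl]

lemma twistedRho_mul (c w w' : H) :
    twistedRho C c (w * w') = twistedRho C (w' * c) w + twistedRho C (c * w) w' := by
  rw [twistedRho, (hC 0).2.2.2, map_add, sandwich_dia, sandwich_dia, mul_one, one_mul,
    twistedRho, twistedRho]

lemma twistedRho_x_pow (c : H) (m : ℕ) :
    twistedRho C c (Hx ^ m) = ∑ i ∈ range m, Hx ^ (m - i) * c * Hx ^ i * Hy := by
  induction m generalizing c with
  | zero => simpa using twistedRho_one_right hC c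
  | succ m ih =>
    rw [pow_succ, twistedRho_mul hC, ih, twistedRho_x hC, sum_range_succ, Nat.add_sub_cancel_left,
      pow_one]
    congr 1
    · refine sum_congr rfl fun i hi => ?_
      rw [Nat.sub_add_comm (mem_range.mp hi).le, pow_succ]
      noncomm_ring
    · noncomm_ring

lemma twistedRho_zw (c : H) {m : ℕ} (hm : 1 ≤ m) :
    twistedRho C c (zw m) =
      ∑ i ∈ Icc 1 (m - 1), zw (m - i + 1) * c * zw i - Hx * c * zw m := by
  have hIcc : Icc 1 (m - 1) = Ico 1 m := by ext; simp; omega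
  rw [zw, twistedRho_mul hC, twistedRho_x_pow hC, twistedRho_y hC, hIcc, sum_Ico_eq_sum_range,
    ← sub_eq_add_neg]
  congr 1
  · refine sum_congr rfl fun i hi => ?_
    have hi : i < m - 1 := mem_range.mp hi
    simp only [zw, show m - (1 + i) + 1 - 1 = m - 1 - i by omega, Nat.add_sub_cancel_left]
    noncomm_ring
  · noncomm_ring

lemma twistedRho_zseq (k : ℕ → ℕ) (l a : ℕ) (c : H) :
    twistedRho C c (zseq k a l) = ∑ j ∈ range l,
      twistedRho C (zseq k (a + j + 1) (l - 1 - j) * c * zseq k a j) (zw (k (a + j))) := by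
  induction l generalizing a c with
  | zero => simp [zseq_zero, twistedRho_one_right hC]
  | succ l ih =>
    rw [zseq_succ, twistedRho_mul hC, ih, sum_range_succ', add_comm]
    congr 1
    · refine sum_congr rfl fun j _ => ?_
      rw [zseq_succ k a j, show l + 1 - 1 - (j + 1) = l - 1 - j by omega,
        show a + (j + 1) = a + 1 + j by omega]
      noncomm_ring
    · simp [zseq_zero]

lemma twistedRho_one_left_zseq {k : ℕ → ℕ} {l : ℕ} (hk : Function.Periodic k (l + 1))
    (hpos : ∀ j, 1 ≤ k j) : twistedRho C 1 (zseq k 0 (l + 1)) = rhoFormula k (l + 1) := by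
  have hrest (j : ℕ) (hj : j ∈ range (l + 1)) :
      zseq k (j + 1) (l - j) * zseq k 0 j = zseq k (j + 1) l := by
    rw [zseq_mul_zseq_of_periodic hk _ _ (by grind)]
    congr 1
    grind
  have hneg (j : ℕ) :
      Hx * zseq k (j + 1) l * zw (k j) = zw (k (j + 1) + 1) * zseq k (j + 2) l := by
    rw [mul_assoc, ← hk j, show j + (l + 1) = j + 1 + l by omega, ← zseq_succ', zseq_succ,
      ← mul_assoc, Hx_mul_zw (hpos _)]
  have hshift := sum_range_shift_of_eq (fun j => zw (k j + 1) * zseq k (j + 1) l) (l + 1) (by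
    rw [← zero_add (l + 1), hk 0, show 0 + (l + 1) + 1 = 1 + (l + 1) by omega,
      zseq_add_period hk])
  rw [twistedRho_zseq hC, rhoFormula, Nat.add_sub_cancel, ← hshift, ← sum_sub_distrib]
  refine sum_congr rfl fun j hj => ?_
  simp only [zero_add, mul_one, hrest j hj]
  rw [twistedRho_zw hC _ (hpos j), hneg]

end TwistedRho

/-- `ρ₀(w) = ρ(w)` for all `w ∈ Ȟ¹`, where `ρ_n = M_n ∘ C_n`. -/
theorem rho_zero_eq_rho (C : ∀ n : ℕ, H →ₗ[ℚ] TensorPower ℚ (n + 2) H) (hC : IsC C)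
    (rho : H →ₗ[ℚ] H) (hrho : IsRho rho) :
    ∀ w ∈ Hcheck, Mn 0 (C 0 w) = rho w := by
  refine fun w hw => LinearMap.eqOn_span (f := Mn 0 ∘ₗ C 0) (g := rho) ?_ hw
  rintro _ ⟨l, k, hpos, ⟨i, hi⟩, rfl⟩
  set k' : ℕ → ℕ := fun j => k (Fin.ofNat (l + 1) j)
  have hk' : Function.Periodic k' (l + 1) := fun j =>
    congrArg k (Fin.ext (by rw [Fin.val_ofNat, Fin.val_ofNat, Nat.add_mod_right]))
  have hi' : k' i ≠ 1 := by simpa [k'] using hi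
  rw [LinearMap.comp_apply, zwords_eq_zseq, ← sandwich_one,
    hrho (l + 1) k' l.succ_pos hk' (fun j => hpos _) ⟨i, hi'⟩]
  exact twistedRho_one_left_zseq hC hk' fun j => hpos _
end
end

section
/- Define sgn(x) = 1, sgn(y) = −1, sgn(z) = 0. If w = u₁⋯u_k with u₁,…,u_k ∈ {x, y, z}, then for every n ≥ 0, ρ_n(w) = ∑_{j=1}^{k} sgn(u_j) · x u_{j+1} ⋯ u_k z^n u₁ ⋯ u_{j−1} y. -/
noncomputable section

open Finset

/-! `C_n` is a derivation for the twisted bimodule structure `◇`, so on a word `u₁⋯u_m` it is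
the sum over the letters of `u₁⋯u_{j-1} ◇ C_n(u_j) ◇ u_{j+1}⋯u_m`, and
`C_n(u_j) = sgn(u_j) · x ⊗ z^{⊗n} ⊗ y`. The multiplication map sends
`a ◇ (x ⊗ z^{⊗n} ⊗ y) ◇ b` to `x b z^n a y`, since `◇` acts on the right of the first
factor and on the left of the last one. -/

section Dia

variable (n : ℕ)

lemma dia_dia (a a' b b' : H) (t : TensorPower ℚ (n + 2) H) :
    dia n a (dia n a' t b') b = dia n (a * a') t (b' * b) := by
  unfold dia
  rw [← LinearMap.comp_apply, ← PiTensorProduct.map_comp]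
  congr 2
  funext i
  by_cases h0 : i = 0
  · simp [h0, LinearMap.mulRight_mul]
  · by_cases hl : i = Fin.last (n + 1) <;> simp [h0, hl, LinearMap.mulLeft_mul]

lemma dia_smul (a b : H) (c : ℚ) (t : TensorPower ℚ (n + 2) H) :
    dia n a (c • t) b = c • dia n a t b :=
  map_smul _ _ _

lemma dia_sum {ι : Type*} (s : Finset ι) (a b : H) (t : ι → TensorPower ℚ (n + 2) H) :
    dia n a (∑ i ∈ s, t i) b = ∑ i ∈ s, dia n a (t i) b :=
  map_sum _ _ _

lemma map_ofFn_prod_eq_sum_dia (D : H →ₗ[ℚ] TensorPower ℚ (n + 2) H) (hD_one : D 1 = 0)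
    (hD_mul : ∀ w w' : H, D (w * w') = dia n 1 (D w) w' + dia n w (D w') 1)
    {m : ℕ} (f : Fin m → H) :
    D (List.ofFn f).prod =
      ∑ j : Fin m, dia n ((List.ofFn f).take j).prod (D (f j))
        ((List.ofFn f).drop (j + 1)).prod := by
  induction m with
  | zero => simp [hD_one]
  | succ m ih =>
    rw [List.ofFn_succ, List.prod_cons, hD_mul, ih, dia_sum, Fin.sum_univ_succ]
    simp only [Fin.val_zero, Fin.val_succ, List.take_zero, List.take_succ_cons,
      List.drop_succ_cons, List.drop_zero, List.prod_cons, List.prod_nil, dia_dia, mul_one]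

lemma Mn_dia_xzy (a b : H) : Mn n (dia n a (xzy n) b) = Hx * b * Hz ^ n * (a * Hy) := by
  rw [Mn, dia, xzy, PiTensorProduct.map_tprod, PiTensorProduct.lift.tprod,
    MultilinearMap.mkPiAlgebraFin_apply, List.ofFn_succ', List.ofFn_succ]
  simp [Fin.succ_ne_zero, mul_assoc]

end Dia

lemma C_letter {C : ∀ n : ℕ, H →ₗ[ℚ] TensorPower ℚ (n + 2) H} (hC : IsC C) (n : ℕ)
    (v : Fin 3) : C n ((![Hx, Hy, Hz] : Fin 3 → H) v) = (![(1 : ℚ), -1, 0]) v • xzy n := by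
  obtain ⟨-, hx, hy, -⟩ := hC n
  fin_cases v
  · simp [hx]
  · simp only [Fin.mk_one, Matrix.cons_val_one, Matrix.cons_val_zero, hy]
    exact (neg_one_smul ℚ (xzy n)).symm
  · simp [Hz, hx, hy]

/-- If `w = u₁⋯u_m` with each `u_j ∈ {x, y, z}` (encoded by `Fin 3`, `0 ↦ x`,
`1 ↦ y`, `2 ↦ z`, with `sgn(x) = 1`, `sgn(y) = −1`, `sgn(z) = 0`), then
`ρ_n(w) = ∑_{j=1}^{m} sgn(u_j) · x u_{j+1} ⋯ u_m z^n u₁ ⋯ u_{j−1} y`. -/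
theorem rho_n_on_words (C : ∀ n : ℕ, H →ₗ[ℚ] TensorPower ℚ (n + 2) H) (hC : IsC C)
    (n : ℕ) (m : ℕ) (u : Fin m → Fin 3) :
    Mn n (C n (List.ofFn fun j => (![Hx, Hy, Hz] : Fin 3 → H) (u j)).prod) =
      ∑ j : Fin m, (![(1 : ℚ), -1, 0]) (u j) •
        (Hx * ((List.ofFn fun t => (![Hx, Hy, Hz] : Fin 3 → H) (u t)).drop ((j : ℕ) + 1)).prod
          * Hz ^ n
          * ((List.ofFn fun t => (![Hx, Hy, Hz] : Fin 3 → H) (u t)).take (j : ℕ)).prod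
          * Hy) := by
  obtain ⟨hC_one, -, -, hC_mul⟩ := hC n
  rw [map_ofFn_prod_eq_sum_dia n (C n) hC_one hC_mul, map_sum]
  refine Finset.sum_congr rfl fun j _ => ?_
  rw [C_letter hC, dia_smul, map_smul, Mn_dia_xzy, ← mul_assoc]
end
end

section
/- For every l ≥ 1, if (u₁,…,u_l), (v₁,…,v_l) ∈ {y,z}^l are cyclically equivalent (i.e., (v₁,…,v_l) = (u_{j+1},…,u_{j+l}) for some j, indices mod l), then ρ₀(u₁⋯u_l) = ρ₀(v₁⋯v_l); hence ρ₀ induces a well-defined map ρ̃₀ : Y_l → H on cyclic equivalence classes. -/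
noncomputable section

open Finset

/-! On `H ⊗ H` both `a ◇ t` and `t ◇ a` multiply out to `t₁ a t₂`, so the product rule
gives `ρ₀(ab) = M₀(C₀(a) ◇ b) + M₀(a ◇ C₀(b)) = ρ₀(ba)`: `ρ₀` is a trace. A cyclic shift
of a word is a rotation of its list of letters, i.e. passes from `ab` to `ba`. -/

theorem List.apply_prod_rotate {M β : Type*} [Monoid M] (f : M → β)
    (hf : ∀ a b, f (a * b) = f (b * a)) (L : List M) (n : ℕ) :
    f (L.rotate n).prod = f L.prod := by
  rw [List.rotate_eq_drop_append_take_mod, List.prod_append, hf, ← List.prod_append,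
    List.take_append_drop]

theorem List.ofFn_add_eq_rotate {α : Type*} {l : ℕ} (u : Fin l → α) (j : Fin l) :
    List.ofFn (fun t => u (t + j)) = (List.ofFn u).rotate j := by
  refine List.ext_getElem (by simp) fun i _ _ => ?_
  simp only [List.getElem_rotate, List.getElem_ofFn, List.length_ofFn]
  congr 1

theorem Mn_zero_dia_left_eq_dia_right (a : H) (t : TensorPower ℚ 2 H) :
    Mn 0 (dia 0 a t 1) = Mn 0 (dia 0 1 t a) := by
  induction t using PiTensorProduct.induction_on with
  | smul_tprod c f =>
    simp [dia, Mn, List.ofFn_succ, Fin.last, mul_assoc]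
  | add t t' ht ht' =>
    simp only [dia, map_add] at ht ht' ⊢
    rw [ht, ht']

theorem Mn_zero_apply_mul_comm (C : H → TensorPower ℚ 2 H)
    (hC : ∀ w w', C (w * w') = dia 0 1 (C w) w' + dia 0 w (C w') 1) (a b : H) :
    Mn 0 (C (a * b)) = Mn 0 (C (b * a)) := by
  rw [hC, hC, map_add, map_add, Mn_zero_dia_left_eq_dia_right a,
    Mn_zero_dia_left_eq_dia_right b, add_comm]

theorem rho0_cyclic_invariant_general (l : ℕ)
    (C : ∀ n : ℕ, H →ₗ[ℚ] TensorPower ℚ (n + 2) H) (hC : IsC C)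
    (u v : Fin l → Fin 2) (h : cycRel l u v) :
    Mn 0 (C 0 (wprod u)) = Mn 0 (C 0 (wprod v)) := by
  obtain ⟨j, hj⟩ := h
  have hv : wprod v = ((List.ofFn fun t => yz (u t)).rotate j).prod := by
    rw [wprod, ← List.ofFn_add_eq_rotate]
    simp only [hj]
  rw [hv, List.apply_prod_rotate (fun w => Mn 0 (C 0 w))
    (Mn_zero_apply_mul_comm (C 0) (hC 0).2.2.2), wprod]

/-- If two `{y,z}`-tuples (encoded by `Fin 2`: `0 ↦ y`, `1 ↦ z`) are cyclically
equivalent, then `ρ₀(u₁⋯u_l) = ρ₀(v₁⋯v_l)`; hence `ρ₀` induces a well-defined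
map `ρ̃₀` on cyclic equivalence classes. -/
theorem rho0_cyclic_invariant (l : ℕ) (hl : 1 ≤ l)
    (C : ∀ n : ℕ, H →ₗ[ℚ] TensorPower ℚ (n + 2) H) (hC : IsC C)
    (u v : Fin l → Fin 2) (h : cycRel l u v) :
    Mn 0 (C 0 (wprod u)) = Mn 0 (C 0 (wprod v)) :=
  rho0_cyclic_invariant_general l C hC u v h
end
end

section
/- Let l ≥ 1, n ∈ {0, 1, …, l}, and let m be a positive divisor of l. Then #{u ∈ X_{l,n} : m·u = u} = 2^m − L^n_m, where m·u denotes the action of m ∈ ℤ/lℤ on u by cyclic shift. -/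
noncomputable section

open Finset

/-! A tuple fixed by the shift by `m` is determined by its first `m` letters, and since `n ≤ l`
it lies in `X_{l,n}` exactly when this word of length `m` contains `z^n` cyclically. It remains to
count the words of length `m` without a cyclic run `z^n`. For `m ≤ n` these are all words but
`z^m`, giving `2^m - 1`. For `m > n` such a word reads `z^k y z^j y w` with `j < n`, and deleting
the block `z^j y` after its first `y` is a bijection onto the words of length `m - (j + 1)` without
a cyclic run `z^n`: this is the recurrence `L^n_m = L^n_{m-1} + ⋯ + L^n_{m-n}`. -/

namespace List

theorem infix_append_cons_iff_of_notMem {α : Type*} {l xs ys : List α} {b : α} (hb : b ∉ l) :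
    l <:+: xs ++ b :: ys ↔ l <:+: xs ∨ l <:+: ys := by
  constructor
  · intro h
    rcases infix_append_iff.mp h with h | h | ⟨l₁, l₂, rfl, h₁, h₂⟩
    · exact Or.inl h
    · rcases infix_cons_iff.mp h with h | h
      · rcases l with _ | ⟨a, l⟩
        · exact Or.inl nil_infix
        · obtain rfl := (cons_prefix_cons.mp h).1
          simp at hb
      · exact Or.inr h
    · rcases l₂ with _ | ⟨a, l₂⟩
      · simpa using Or.inl h₁.isInfix
      · obtain rfl := (cons_prefix_cons.mp h₂).1
        simp at hb
  · rintro (h | h)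
    · exact h.trans infix_append_left
    · exact h.trans ((suffix_cons _ _).isInfix.trans infix_append_right)

theorem replicate_infix_replicate_iff {α : Type*} {a : α} {n j : ℕ} :
    replicate n a <:+: replicate j a ↔ n ≤ j := by
  simp [infix_replicate_iff]

end List

theorem lucas_of_le {n m : ℕ} (hn : n ≠ 0) (hm : m ≤ n) : Lucas n m = 2 ^ m - 1 := by
  rw [Lucas]
  simp [hn, hm]

theorem lucas_of_lt {n m : ℕ} (hn : n ≠ 0) (hm : n < m) :
    Lucas n m = ∑ i ∈ Icc 1 n, Lucas n (m - i) := by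
  rw [Lucas, dif_neg hn, dif_neg (by omega)]
  exact sum_attach (Icc 1 n) fun i => Lucas n (m - i)

namespace CyclicWord

open List (replicate)

theorem replicate_one_append_zero_cons_inj {k k' : ℕ} {x x' : List (Fin 2)} :
    replicate k 1 ++ 0 :: x = replicate k' 1 ++ 0 :: x' ↔ k = k' ∧ x = x' := by
  induction k generalizing k' with
  | zero => cases k' <;> simp [List.replicate_succ]
  | succ k ih => cases k' <;> simp [List.replicate_succ, ih]

theorem eq_replicate_or_exists_replicate_append_zero_cons (v : List (Fin 2)) :
    v = replicate v.length 1 ∨ ∃ k x, v = replicate k 1 ++ 0 :: x := by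
  induction v with
  | nil => simp
  | cons a v ih =>
    rcases Fin.exists_fin_two.mp ⟨a, rfl⟩ with rfl | rfl
    · exact Or.inr ⟨0, v, rfl⟩
    · rcases ih with h | ⟨k, x, rfl⟩
      · exact Or.inl (by rw [h]; simp [List.replicate_succ])
      · exact Or.inr ⟨k + 1, x, rfl⟩

def HasCyclicRun (n : ℕ) (v : List (Fin 2)) : Prop :=
  ∃ j, ∀ t < n, v[(j + t) % v.length]? = some 1

theorem hasCyclicRun_rotate (n r : ℕ) (v : List (Fin 2)) :
    HasCyclicRun n (v.rotate r) ↔ HasCyclicRun n v := by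
  rcases Nat.eq_zero_or_pos v.length with h | hL
  · simp [List.length_eq_zero_iff.mp h]
  have key : ∀ a, (v.rotate r)[a % v.length]? = v[(a + r) % v.length]? := fun a => by
    rw [List.getElem?_rotate (Nat.mod_lt _ hL), Nat.mod_add_mod]
  simp only [HasCyclicRun, List.length_rotate, key]
  constructor
  · rintro ⟨j, hj⟩
    exact ⟨j + r, fun t ht => by rw [← hj t ht, Nat.add_right_comm]⟩
  · rintro ⟨j, hj⟩
    refine ⟨j + (v.length - 1) * r, fun t ht => ?_⟩
    have : j + (v.length - 1) * r + t + r = j + t + v.length * r := by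
      have : v.length * r = (v.length - 1) * r + r := by
        rw [← Nat.succ_mul, Nat.succ_eq_add_one, Nat.sub_add_cancel hL]
      omega
    rw [this, Nat.add_mul_mod_self_left, hj t ht]

theorem hasCyclicRun_append_zero (n : ℕ) (w : List (Fin 2)) :
    HasCyclicRun n (w ++ [0]) ↔ replicate n 1 <:+: w := by
  simp only [HasCyclicRun, List.infix_iff_getElem?, List.length_replicate,
    List.getElem_replicate, List.length_append, List.length_singleton]
  constructor
  · rintro ⟨j, hj⟩
    have hmod : ∀ t, (j + t) % (w.length + 1) = (j % (w.length + 1) + t) % (w.length + 1) :=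
      fun t => by rw [Nat.mod_add_mod]
    have hjL := Nat.mod_lt j (by omega : 0 < w.length + 1)
    -- the run cannot cover the final `0`
    have hfit : j % (w.length + 1) + n ≤ w.length := by
      by_contra hcon
      have := hj (w.length - j % (w.length + 1)) (by omega)
      rw [hmod, Nat.add_sub_cancel' (by omega), Nat.mod_eq_of_lt (Nat.lt_succ_self _),
        List.getElem?_append_right le_rfl] at this
      simp at this
    refine ⟨j % (w.length + 1), by omega, fun i hi => ?_⟩
    have := hj i hi
    rwa [hmod, Nat.mod_eq_of_lt (by omega), List.getElem?_append_left (by omega),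
      Nat.add_comm] at this
  · rintro ⟨k, hk, hw⟩
    refine ⟨k, fun t ht => ?_⟩
    rw [Nat.mod_eq_of_lt (by omega), List.getElem?_append_left (by omega), Nat.add_comm,
      hw t ht]

theorem hasCyclicRun_replicate_append_zero_cons (n k : ℕ) (x : List (Fin 2)) :
    HasCyclicRun n (replicate k 1 ++ 0 :: x) ↔ replicate n 1 <:+: x ++ replicate k 1 := by
  have h : (replicate k 1 ++ 0 :: x).rotate (k + 1) = x ++ replicate k 1 ++ [0] := by
    have := List.rotate_append_length_eq (replicate k 1 ++ [0]) x
    simp only [List.length_append, List.length_replicate, List.length_singleton,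
      List.append_assoc, List.singleton_append] at this
    rw [this, List.append_assoc]
  rw [← hasCyclicRun_rotate n (k + 1), h, hasCyclicRun_append_zero]

theorem hasCyclicRun_replicate (n : ℕ) {m : ℕ} (hm : 0 < m) : HasCyclicRun n (replicate m 1) :=
  ⟨0, fun t _ => by simp [Nat.mod_lt _ hm]⟩

def words (m : ℕ) : Finset (List (Fin 2)) :=
  (univ : Finset (List.Vector (Fin 2) m)).map ⟨List.Vector.toList, List.Vector.toList_injective⟩

theorem mem_words {m : ℕ} {v : List (Fin 2)} : v ∈ words m ↔ v.length = m := by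
  simp only [words, mem_map, mem_univ, true_and, Function.Embedding.coeFn_mk]
  exact ⟨fun ⟨w, hw⟩ => hw ▸ w.2, fun h => ⟨⟨v, h⟩, rfl⟩⟩

theorem card_words (m : ℕ) : #(words m) = 2 ^ m := by
  simp [words]

open scoped Classical in
def cycAvoiding (n m : ℕ) : Finset (List (Fin 2)) :=
  (words m).filter fun v => ¬HasCyclicRun n v

theorem cycAvoiding_subset_words (n m : ℕ) : cycAvoiding n m ⊆ words m := by
  classical exact filter_subset _ _

theorem replicate_append_zero_cons_mem_cycAvoiding {n m k : ℕ} {x : List (Fin 2)} :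
    replicate k 1 ++ 0 :: x ∈ cycAvoiding n m ↔
      k + x.length + 1 = m ∧ ¬replicate n 1 <:+: x ++ replicate k 1 := by
  simp only [cycAvoiding, mem_filter, mem_words, hasCyclicRun_replicate_append_zero_cons,
    List.length_append, List.length_replicate, List.length_cons]
  exact and_congr_left' (by omega)

theorem exists_replicate_append_zero_cons_of_mem_cycAvoiding {n m : ℕ} (hm : 0 < m)
    {v : List (Fin 2)} (hv : v ∈ cycAvoiding n m) : ∃ k x, v = replicate k 1 ++ 0 :: x := by
  simp only [cycAvoiding, mem_filter, mem_words] at hv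
  refine (eq_replicate_or_exists_replicate_append_zero_cons v).resolve_left fun h => hv.2 ?_
  rw [h]
  exact hasCyclicRun_replicate n (hv.1 ▸ hm)

theorem cycAvoiding_eq_erase {n m : ℕ} (hm : 0 < m) (hmn : m ≤ n) :
    cycAvoiding n m = (words m).erase (replicate m 1) := by
  ext v
  rw [mem_erase, mem_words]
  constructor
  · intro hv
    obtain ⟨k, x, rfl⟩ := exists_replicate_append_zero_cons_of_mem_cycAvoiding hm hv
    rw [replicate_append_zero_cons_mem_cycAvoiding] at hv
    refine ⟨fun h => ?_, by simp; omega⟩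
    have := congrArg (0 ∈ ·) h
    simp at this
  · rintro ⟨hne, hlen⟩
    obtain ⟨k, x, rfl⟩ :=
      (eq_replicate_or_exists_replicate_append_zero_cons v).resolve_left (hlen ▸ hne)
    simp only [List.length_append, List.length_replicate, List.length_cons] at hlen
    refine replicate_append_zero_cons_mem_cycAvoiding.mpr ⟨by omega, fun h => ?_⟩
    have := h.length_le
    simp only [List.length_append, List.length_replicate] at this
    omega

def insertAfterFirstZero (b : List (Fin 2)) : List (Fin 2) → List (Fin 2)
  | [] => []
  | a :: x => if a = 0 then 0 :: (b ++ x) else a :: insertAfterFirstZero b x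

theorem insertAfterFirstZero_replicate_append_zero_cons (b : List (Fin 2)) (k : ℕ)
    (x : List (Fin 2)) :
    insertAfterFirstZero b (replicate k 1 ++ 0 :: x) = replicate k 1 ++ 0 :: (b ++ x) := by
  induction k with
  | zero => simp [insertAfterFirstZero]
  | succ k ih => simp [List.replicate_succ, insertAfterFirstZero, ih]

theorem eq_of_insertAfterFirstZero_eq {i i' : ℕ} {v v' : List (Fin 2)}
    (hv : ∃ k x, v = replicate k 1 ++ 0 :: x) (hv' : ∃ k x, v' = replicate k 1 ++ 0 :: x)
    (h : insertAfterFirstZero (replicate i 1 ++ [0]) v =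
      insertAfterFirstZero (replicate i' 1 ++ [0]) v') : i = i' ∧ v = v' := by
  obtain ⟨k, x, rfl⟩ := hv
  obtain ⟨k', x', rfl⟩ := hv'
  simp only [insertAfterFirstZero_replicate_append_zero_cons, List.append_assoc,
    List.singleton_append, replicate_one_append_zero_cons_inj] at h
  obtain ⟨rfl, rfl, rfl⟩ := h
  exact ⟨rfl, rfl⟩

theorem cycAvoiding_eq_biUnion {n m : ℕ} (hnm : n < m) :
    cycAvoiding n m = (Icc 1 n).biUnion fun i =>
      (cycAvoiding n (m - i)).image (insertAfterFirstZero (replicate (i - 1) 1 ++ [0])) := by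
  ext v
  simp only [mem_biUnion, mem_image, mem_Icc]
  constructor
  · intro hv
    obtain ⟨k, x, rfl⟩ := exists_replicate_append_zero_cons_of_mem_cycAvoiding (by omega) hv
    obtain ⟨hlen, hrun⟩ := replicate_append_zero_cons_mem_cycAvoiding.mp hv
    rcases eq_replicate_or_exists_replicate_append_zero_cons x with hx | ⟨j, y, rfl⟩
    · refine absurd ?_ hrun
      rw [hx, ← List.replicate_add, List.replicate_infix_replicate_iff]
      omega
    · simp only [List.length_append, List.length_replicate, List.length_cons] at hlen
      rw [List.append_assoc, List.cons_append, List.infix_append_cons_iff_of_notMem (by simp),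
        List.replicate_infix_replicate_iff, not_or] at hrun
      refine ⟨j + 1, ⟨by omega, by omega⟩, replicate k 1 ++ 0 :: y,
        replicate_append_zero_cons_mem_cycAvoiding.mpr ⟨by omega, hrun.2⟩, ?_⟩
      simp [insertAfterFirstZero_replicate_append_zero_cons]
  · rintro ⟨i, hi, v', hv', rfl⟩
    obtain ⟨k, y, rfl⟩ := exists_replicate_append_zero_cons_of_mem_cycAvoiding (by omega) hv'
    obtain ⟨hlen, hrun⟩ := replicate_append_zero_cons_mem_cycAvoiding.mp hv'
    rw [insertAfterFirstZero_replicate_append_zero_cons,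
      replicate_append_zero_cons_mem_cycAvoiding]
    simp only [List.append_assoc, List.cons_append, List.nil_append, List.length_append,
      List.length_replicate, List.length_cons]
    rw [List.infix_append_cons_iff_of_notMem (by simp), List.replicate_infix_replicate_iff,
      not_or]
    exact ⟨by omega, by omega, hrun⟩

theorem card_cycAvoiding (n : ℕ) {m : ℕ} (hm : 0 < m) : #(cycAvoiding n m) = Lucas n m := by
  rcases Nat.eq_zero_or_pos n with rfl | hn
  · classical
    have : cycAvoiding 0 m = ∅ := by
      rw [cycAvoiding, filter_eq_empty_iff]
      exact fun v _ h => h ⟨0, fun t ht => absurd ht (Nat.not_lt_zero t)⟩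
    rw [this, Lucas, dif_pos rfl, card_empty]
  induction m using Nat.strong_induction_on with
  | _ m ih =>
  rcases le_or_gt m n with hmn | hnm
  · rw [cycAvoiding_eq_erase hm hmn, card_erase_of_mem (mem_words.mpr (List.length_replicate ..)),
      card_words, lucas_of_le hn.ne' hmn]
  rw [cycAvoiding_eq_biUnion hnm, card_biUnion, lucas_of_lt hn.ne' hnm]
  · refine sum_congr rfl fun i hi => ?_
    rw [mem_Icc] at hi
    rw [card_image_of_injOn, ih (m - i) (by omega) (by omega)]
    intro v hv v' hv' h
    exact (eq_of_insertAfterFirstZero_eq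
      (exists_replicate_append_zero_cons_of_mem_cycAvoiding (by omega) hv)
      (exists_replicate_append_zero_cons_of_mem_cycAvoiding (by omega) hv') h).2
  · intro i hi i' hi' hne
    simp only [Function.onFun, disjoint_left, mem_image, not_exists, not_and]
    rintro _ ⟨v, hv, rfl⟩ v' hv' h
    rw [mem_coe, mem_Icc] at hi hi'
    have := (eq_of_insertAfterFirstZero_eq
      (exists_replicate_append_zero_cons_of_mem_cycAvoiding (by omega) hv')
      (exists_replicate_append_zero_cons_of_mem_cycAvoiding (by omega) hv) h).1
    omega

theorem getElem?_take_ofFn_mod {α : Type*} {l m : ℕ} (u : Fin l → α) (hml : m ≤ l) (hm : 0 < m)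
    (a : ℕ) :
    ((List.ofFn u).take m)[a % m]? = some (u ⟨a % m, (Nat.mod_lt _ hm).trans_le hml⟩) := by
  rw [List.getElem?_take_of_lt (Nat.mod_lt _ hm), List.getElem?_ofFn,
    dif_pos ((Nat.mod_lt _ hm).trans_le hml)]

theorem take_ofFn_getD_mod {α : Type*} {l m : ℕ} (hml : m ≤ l) {v : List α} (hv : v.length = m)
    (d : α) : (List.ofFn fun t : Fin l => v.getD (t % m) d).take m = v := by
  apply List.ext_getElem?
  intro i
  rcases lt_or_ge i m with hi | hi
  · rw [List.getElem?_take_of_lt hi, List.getElem?_ofFn, dif_pos (by omega), Nat.mod_eq_of_lt hi,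
      List.getD_eq_getElem?_getD, List.getElem?_eq_getElem (by omega)]
    rfl
  · simp [hi, hv]

section Periodic

variable {α : Type*} {l m : ℕ} [NeZero l] {u : Fin l → α}

theorem apply_eq_apply_mod (hml : m ≤ l) (hu : ∀ t, u (t + Fin.ofNat l m) = u t) (t : Fin l) :
    u t = u ⟨t % m, (Nat.mod_le _ _).trans_lt t.isLt⟩ := by
  rcases Nat.eq_zero_or_pos m with rfl | hm
  · simp
  obtain ⟨t, ht⟩ := t
  induction t using Nat.strong_induction_on with
  | _ t ih =>
  rcases lt_or_ge t m with htm | htm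
  · simp only [Nat.mod_eq_of_lt htm]
  have hsplit : (⟨t - m, by omega⟩ + Fin.ofNat l m : Fin l) = ⟨t, ht⟩ := by
    rw [Fin.ext_iff, Fin.val_add, Fin.val_ofNat, Nat.mod_eq_of_lt (show m < l by omega),
      Nat.sub_add_cancel htm, Nat.mod_eq_of_lt ht]
  conv_lhs => rw [← hsplit, hu, ih (t - m) (by omega)]
  simp only [← Nat.mod_eq_sub_mod htm]

theorem apply_eq_apply_of_mod_eq (hml : m ≤ l) (hu : ∀ t, u (t + Fin.ofNat l m) = u t)
    {x y : Fin l} (h : (x : ℕ) % m = y % m) : u x = u y := by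
  rw [apply_eq_apply_mod hml hu x, apply_eq_apply_mod hml hu y]
  simp only [h]

end Periodic

theorem mem_Xln_iff_hasCyclicRun {l n m : ℕ} [NeZero l] {u : Fin l → Fin 2} (hn : n ≤ l)
    (hm : m ∣ l) (hu : ∀ t, u (t + Fin.ofNat l m) = u t) :
    u ∈ Xln l n ↔ HasCyclicRun n ((List.ofFn u).take m) := by
  have hml : m ≤ l := Nat.le_of_dvd (NeZero.pos l) hm
  have hm0 : 0 < m := Nat.pos_of_dvd_of_pos hm (NeZero.pos l)
  have hlen : ((List.ofFn u).take m).length = m := by simp [hml]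
  simp only [Xln, Set.mem_ofPred_eq, HasCyclicRun, hlen, getElem?_take_ofFn_mod u hml hm0,
    Option.some.injEq]
  have hval : ∀ x y : Fin l, ((x + y : Fin l) : ℕ) % m = (x + y : ℕ) % m := fun x y => by
    rw [Fin.val_add, Nat.mod_mod_of_dvd _ hm]
  constructor
  · rintro ⟨j, hj⟩
    refine ⟨j, fun t ht => ?_⟩
    rw [← hj ⟨t, by omega⟩ ht]
    exact apply_eq_apply_of_mod_eq hml hu (by simp [hval, Nat.add_comm])
  · rintro ⟨j, hj⟩
    refine ⟨Fin.ofNat l j, fun t ht => ?_⟩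
    rw [← hj t ht]
    refine apply_eq_apply_of_mod_eq hml hu ?_
    simp only [hval, Fin.val_ofNat]
    rw [Nat.add_mod, Nat.mod_mod_of_dvd _ hm, ← Nat.add_mod, Nat.add_comm, Nat.mod_mod]

theorem mem_words_sdiff_cycAvoiding {n m : ℕ} {v : List (Fin 2)} :
    v ∈ words m \ cycAvoiding n m ↔ v.length = m ∧ HasCyclicRun n v := by
  simp only [cycAvoiding, mem_sdiff, mem_filter, mem_words, not_and, not_not]
  tauto

def fixedPointsEquiv {l n m : ℕ} [NeZero l] (hn : n ≤ l) (hm : m ∣ l) :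
    {u : Fin l → Fin 2 // u ∈ Xln l n ∧ ∀ t, u (t + Fin.ofNat l m) = u t} ≃
      {v // v ∈ words m \ cycAvoiding n m} where
  toFun u := ⟨(List.ofFn u.1).take m, mem_words_sdiff_cycAvoiding.mpr
    ⟨by simp [Nat.le_of_dvd (NeZero.pos l) hm], (mem_Xln_iff_hasCyclicRun hn hm u.2.2).mp u.2.1⟩⟩
  invFun v := by
    refine ⟨fun t => v.1.getD (t % m) 0, ?_⟩
    obtain ⟨hlen, hrun⟩ := mem_words_sdiff_cycAvoiding.mp v.2
    have hu : ∀ t, v.1.getD ((t + Fin.ofNat l m : Fin l) % m) 0 = v.1.getD (t % m) 0 := by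
      intro t
      rw [Fin.val_add, Nat.mod_mod_of_dvd _ hm, Nat.add_mod, Fin.val_ofNat,
        Nat.mod_mod_of_dvd _ hm, Nat.mod_self, Nat.add_zero, Nat.mod_mod]
    refine ⟨(mem_Xln_iff_hasCyclicRun hn hm hu).mpr ?_, hu⟩
    rwa [take_ofFn_getD_mod (Nat.le_of_dvd (NeZero.pos l) hm) hlen]
  left_inv u := by
    have hml := Nat.le_of_dvd (NeZero.pos l) hm
    ext1
    funext t
    simp only [List.getD_eq_getElem?_getD,
      getElem?_take_ofFn_mod u.1 hml (Nat.pos_of_dvd_of_pos hm (NeZero.pos l)), Option.getD_some]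
    exact (apply_eq_apply_mod hml u.2.2 t).symm
  right_inv v := Subtype.ext <| take_ofFn_getD_mod (Nat.le_of_dvd (NeZero.pos l) hm)
    (mem_words_sdiff_cycAvoiding.mp v.2).1 0

end CyclicWord

/-- For `l ≥ 1`, `0 ≤ n ≤ l` and `m` a positive divisor of `l`,
`#{u ∈ X_{l,n} : m·u = u} = 2^m − L^n_m`. -/
theorem card_fixed_Xln (l n m : ℕ) [NeZero l] (hn : n ≤ l) (hm : m ∣ l) :
    Nat.card {u : Fin l → Fin 2 // u ∈ Xln l n ∧ ∀ t, u (t + (Fin.ofNat l m)) = u t} =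
      2 ^ m - Lucas n m := by
  rw [Nat.card_congr (CyclicWord.fixedPointsEquiv hn hm), Nat.card_eq_finsetCard,
    card_sdiff_of_subset (CyclicWord.cycAvoiding_subset_words n m), CyclicWord.card_words,
    CyclicWord.card_cycAvoiding n (Nat.pos_of_dvd_of_pos hm (NeZero.pos l))]
end
end
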